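/- Let F : D → C be a Grothendieck opfibration and d ∈ D. Then the inclusion R : D(F(d))/d → D/d of the fiberwise slice category over d into the full slice category over d admits a left adjoint L, given by factoring any morphism d' → d as an opCartesian morphism followed by a fiberwise morphism. -/

import Mathlib

/-!
Factor the structure map of `A : Over d` as an opCartesian `ι : A.left ⟶ m` followed by a
vertical `π : m ⟶ d`; then `π` is the reflection of `A` into the fibre slice. A morphism
`A ⟶ X` over `d` with `X` in the fibre slice is `ι` followed by a unique vertical morphism
`m ⟶ X.left`, by the universal property of `ι`; and morphisms of the fibre slice are
automatically vertical, since composed with the vertical `X.hom` they give a vertical map.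
-/

open CategoryTheory

universe v₁ u₁ v₂ u₂ v₃ u₃

section FibDefs

variable {E : Type u₁} [Category.{v₁} E] {C : Type u₂} [Category.{v₂} C]

/-- `α : x ⟶ y` is `p`-opCartesian. -/
def IsOpCart (p : E ⥤ C) {x y : E} (α : x ⟶ y) : Prop :=
  ∀ ⦃z : E⦄ (β : x ⟶ z) (h : p.obj z = p.obj y),
    p.map β ≫ eqToHom h = p.map α →
      ∃! γ : y ⟶ z, α ≫ γ = β ∧ p.map γ = eqToHom h.symm

/-- `α : x ⟶ y` is `p`-Cartesian. -/
def IsCart (p : E ⥤ C) {x y : E} (α : x ⟶ y) : Prop :=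
  ∀ ⦃z : E⦄ (β : z ⟶ y) (h : p.obj z = p.obj x),
    eqToHom h ≫ p.map α = p.map β →
      ∃! γ : z ⟶ x, γ ≫ α = β ∧ p.map γ = eqToHom h

/-- `p : E ⥤ C` is a Grothendieck opfibration. -/
structure IsOpFibration (p : E ⥤ C) : Prop where
  lift : ∀ ⦃a b : C⦄ (f : a ⟶ b) (x : E) (hx : p.obj x = a),
    ∃ (y : E) (α : x ⟶ y) (hy : p.obj y = b),
      IsOpCart p α ∧ p.map α = eqToHom hx ≫ f ≫ eqToHom hy.symm
  comp : ∀ ⦃x y z : E⦄ (α : x ⟶ y) (β : y ⟶ z),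
    IsOpCart p α → IsOpCart p β → IsOpCart p (α ≫ β)

/-- `p : E ⥤ C` is a Grothendieck fibration. -/
structure IsFibration (p : E ⥤ C) : Prop where
  lift : ∀ ⦃a b : C⦄ (f : a ⟶ b) (y : E) (hy : p.obj y = b),
    ∃ (x : E) (α : x ⟶ y) (hx : p.obj x = a),
      IsCart p α ∧ p.map α = eqToHom hx ≫ f ≫ eqToHom hy.symm
  comp : ∀ ⦃x y z : E⦄ (α : x ⟶ y) (β : y ⟶ z),
    IsCart p α → IsCart p β → IsCart p (α ≫ β)

end FibDefs

section Stmt13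

variable {D : Type u₁} [Category.{v₁} D] {C : Type u₂} [Category.{v₂} C]

/-- The fiberwise slice `D(F(d))/d ⊆ D/d`: the full subcategory of the slice category over
`d` consisting of morphisms `d' ⟶ d` which project to the identity of `F(d)`. -/
abbrev FiberSlice (F : D ⥤ C) (d : D) :=
  ObjectProperty.FullSubcategory (fun X : Over d => ∃ h : F.obj X.left = F.obj d, F.map X.hom = eqToHom h)

def IsVertical (F : D ⥤ C) {x y : D} (f : x ⟶ y) : Prop :=
  ∃ h : F.obj x = F.obj y, F.map f = eqToHom h

namespace IsVertical

variable {F : D ⥤ C} {x y z : D} {f : x ⟶ y} {g : y ⟶ z}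

theorem comp (hf : IsVertical F f) (hg : IsVertical F g) : IsVertical F (f ≫ g) := by
  obtain ⟨hxy, hf⟩ := hf
  obtain ⟨hyz, hg⟩ := hg
  exact ⟨hxy.trans hyz, by simp [hf, hg]⟩

theorem of_comp (hfg : IsVertical F (f ≫ g)) (hg : IsVertical F g) : IsVertical F f := by
  obtain ⟨hxz, hfg⟩ := hfg
  obtain ⟨hyz, hg⟩ := hg
  refine ⟨hxz.trans hyz.symm, ?_⟩
  rw [← cancel_mono (eqToHom hyz), ← hg, ← F.map_comp, hfg, hg, eqToHom_trans]

end IsVertical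

namespace IsOpCart

variable {F : D ⥤ C} {x y z w : D} {α : x ⟶ y}

theorem exists_comp_eq (hα : IsOpCart F α) (β : x ⟶ z) (h : F.obj y = F.obj z)
    (hβ : F.map β = F.map α ≫ eqToHom h) : ∃ γ : y ⟶ z, F.map γ = eqToHom h ∧ α ≫ γ = β := by
  obtain ⟨γ, ⟨hγ, hγv⟩, -⟩ := hα β h.symm (by simp [hβ])
  exact ⟨γ, hγv, hγ⟩

theorem hom_ext (hα : IsOpCart F α) {γ₁ γ₂ : y ⟶ z} (h₁ : IsVertical F γ₁)
    (h₂ : IsVertical F γ₂) (e : α ≫ γ₁ = α ≫ γ₂) : γ₁ = γ₂ := by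
  obtain ⟨h, hγ₁⟩ := h₁
  obtain ⟨_, hγ₂⟩ := h₂
  exact (hα (α ≫ γ₁) h.symm (by simp [hγ₁])).unique ⟨rfl, hγ₁⟩ ⟨e.symm, hγ₂⟩

theorem exists_isVertical_diagonal (hα : IsOpCart F α) {β : x ⟶ z} {δ : z ⟶ w} {ε : y ⟶ w}
    (hδ : IsVertical F δ) (hε : IsVertical F ε) (sq : α ≫ ε = β ≫ δ) :
    ∃ γ : y ⟶ z, IsVertical F γ ∧ α ≫ γ = β ∧ γ ≫ δ = ε := by
  obtain ⟨hzw, hδ'⟩ := hδ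
  obtain ⟨hyw, hε'⟩ := hε
  obtain ⟨γ, hγv, hγ⟩ := hα.exists_comp_eq β (hyw.trans hzw.symm) (by
    rw [← cancel_mono (eqToHom hzw), ← hδ', ← F.map_comp, ← sq, F.map_comp, hε']
    simp [hδ'])
  have hγ_vert : IsVertical F γ := ⟨_, hγv⟩
  refine ⟨γ, hγ_vert, hγ, hα.hom_ext (hγ_vert.comp ⟨hzw, hδ'⟩) ⟨hyw, hε'⟩ ?_⟩
  rw [reassoc_of% hγ, sq]

end IsOpCart

theorem IsOpFibration.exists_factorisation {F : D ⥤ C} (hF : IsOpFibration F) {x z : D}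
    (f : x ⟶ z) : ∃ φ : Factorisation f, IsOpCart F φ.ι ∧ IsVertical F φ.π := by
  obtain ⟨y, α, hy, hα, hαf⟩ := hF.lift (F.map f) x rfl
  obtain ⟨γ, hγ, hαγ⟩ := hα.exists_comp_eq f hy (by simp [hαf])
  exact ⟨⟨y, α, γ, hαγ⟩, hα, _, hγ⟩

namespace FiberSlice

variable {F : D ⥤ C} {d : D}

noncomputable def factorisation (hF : IsOpFibration F) (A : Over d) : Factorisation A.hom :=
  (hF.exists_factorisation A.hom).choose

theorem isOpCart_factorisation_ι (hF : IsOpFibration F) (A : Over d) :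
    IsOpCart F (factorisation hF A).ι :=
  (hF.exists_factorisation A.hom).choose_spec.1

theorem isVertical_factorisation_π (hF : IsOpFibration F) (A : Over d) :
    IsVertical F (factorisation hF A).π :=
  (hF.exists_factorisation A.hom).choose_spec.2

noncomputable abbrev reflect (hF : IsOpFibration F) (A : Over d) : FiberSlice F d :=
  ⟨Over.mk (factorisation hF A).π, isVertical_factorisation_π hF A⟩

theorem isVertical_hom_left {X Y : FiberSlice F d} (g : X ⟶ Y) : IsVertical F g.hom.left :=
  IsVertical.of_comp (by rw [Over.w g.hom]; exact X.property) Y.property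

noncomputable def reflectHomEquiv (hF : IsOpFibration F) (A : Over d) (X : FiberSlice F d) :
    (reflect hF A ⟶ X) ≃ (A ⟶ X.obj) :=
  Equiv.ofBijective
    (fun g => Over.homMk ((factorisation hF A).ι ≫ g.hom.left) (by
      rw [Category.assoc, Over.w g.hom]
      exact (factorisation hF A).ι_π))
    ⟨fun g₁ g₂ e => ObjectProperty.hom_ext _ (Over.OverMorphism.ext
      ((isOpCart_factorisation_ι hF A).hom_ext (isVertical_hom_left g₁) (isVertical_hom_left g₂)
        (congrArg CommaMorphism.left e))),
    fun f => by
      obtain ⟨γ, -, hγ, hγπ⟩ := (isOpCart_factorisation_ι hF A).exists_isVertical_diagonal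
        X.property (isVertical_factorisation_π hF A) (by rw [Factorisation.ι_π, Over.w f])
      exact ⟨ObjectProperty.homMk (Over.homMk γ hγπ), Over.OverMorphism.ext hγ⟩⟩

theorem reflectHomEquiv_comp (hF : IsOpFibration F) (A : Over d) (X Y : FiberSlice F d)
    (g : X ⟶ Y) (h : reflect hF A ⟶ X) :
    reflectHomEquiv hF A Y (h ≫ g) = reflectHomEquiv hF A X h ≫ (ObjectProperty.ι _).map g :=
  Over.OverMorphism.ext (Category.assoc _ _ _).symm

noncomputable def reflector (hF : IsOpFibration F) : Over d ⥤ FiberSlice F d :=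
  Adjunction.leftAdjointOfEquiv (G := ObjectProperty.ι _) (reflectHomEquiv hF)
    (reflectHomEquiv_comp hF)

noncomputable def reflectorAdjunction (hF : IsOpFibration F) :
    reflector hF ⊣ ObjectProperty.ι (fun X : Over d => IsVertical F X.hom) :=
  Adjunction.adjunctionOfEquivLeft _ _

theorem reflectorAdjunction_unit_app_left (hF : IsOpFibration F) (A : Over d) :
    ((reflectorAdjunction hF).unit.app A).left = (factorisation hF A).ι :=
  Category.comp_id _

end FiberSlice

/-- For a Grothendieck opfibration `F : D ⥤ C` and `d ∈ D`, the inclusion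
`R : D(F(d))/d ⥤ D/d` of the fiberwise slice into the full slice admits a left adjoint,
given by factoring a morphism `d' ⟶ d` as an opCartesian morphism followed by a fiberwise
one (so that the unit of the adjunction is opCartesian). -/
theorem stmt_13 (F : D ⥤ C) (hF : IsOpFibration F) (d : D) :
    ∃ (L : Over d ⥤ FiberSlice F d)
      (adj : L ⊣ ObjectProperty.ι
        (fun X : Over d => ∃ h : F.obj X.left = F.obj d, F.map X.hom = eqToHom h)),
      ∀ A : Over d, IsOpCart F ((adj.unit.app A).left) := by
  refine ⟨FiberSlice.reflector hF, FiberSlice.reflectorAdjunction hF, fun A => ?_⟩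
  rw [FiberSlice.reflectorAdjunction_unit_app_left]
  exact FiberSlice.isOpCart_factorisation_ι hF A

end Stmt13
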